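/- arXiv:1403.3894 — 4 statements merged into one kernel-verified Lean document; each statement's English description precedes it below -/
import Mathlib

section
/- Let U ⊆ ℝ² be a compact convex set, let b ⊆ ℝ² be a line segment disjoint from U with length |b|, and let ε ∈ [0, π/2]. Suppose the set A := {α ∈ [0, 2π) : U(α) ∩ b(α) ≠ ∅} has Lebesgue measure at most 2π − 4ε. Then ∫₀^{2π} λ(b(α) ∩ U(α)) dα ≤ 4·|b|·cos ε, where λ is one-dimensional Lebesgue measure. -/
/-!
If `β` is the direction of `b`, then `b(α)` is an interval of length `|b| |cos (α - β)|`, and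
`b(α) ∩ U(α) = ∅` for `α ∉ A`. Bound the integrand by `|b| sin ε` on `A` plus the excess
`(|b| |cos (α - β)| - |b| sin ε)⁺` everywhere: the first part integrates to at most
`|b| sin ε (2π - 4ε)`, the second to exactly `|b| (4 cos ε - (2π - 4ε) sin ε)`.
-/

open MeasureTheory Set
open scoped ENNReal NNReal

noncomputable section

/-- The Euclidean plane ℝ². -/
abbrev Plane := EuclideanSpace ℝ (Fin 2)

/-- A line in ℝ²: the set {p + t·v : t ∈ ℝ} for some point p and nonzero vector v. -/
def IsLine (L : Set Plane) : Prop :=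
  ∃ p v : Plane, v ≠ 0 ∧ L = {x | ∃ t : ℝ, x = p + t • v}

/-- `B` is a barrier (opaque set) for `U`: every line meeting `U` meets `B`. -/
def IsBarrier (B U : Set Plane) : Prop :=
  ∀ L : Set Plane, IsLine L → (L ∩ U).Nonempty → (L ∩ B).Nonempty

/-- `B` is rectifiable: a countable union of images of Lipschitz curves `[0,1] → ℝ²`. -/
def IsRectifiableSet (B : Set Plane) : Prop :=
  ∃ (c : Set ℕ) (f : ℕ → ℝ → Plane),
    (∀ n ∈ c, ∃ K : ℝ≥0, LipschitzOnWith K (f n) (Icc 0 1)) ∧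
    B = ⋃ n ∈ c, f n '' Icc 0 1

/-- The projection `S(α) ⊆ ℝ` of a set `S ⊆ ℝ²` at angle `α`:
`S(α) = {x·cos α + y·sin α : (x, y) ∈ S}`. -/
def proj (α : ℝ) (S : Set Plane) : Set ℝ :=
  (fun q : Plane => q 0 * Real.cos α + q 1 * Real.sin α) '' S

open Real intervalIntegral

lemma exists_eq_norm_mul_cos_sin (v : Plane) :
    ∃ β, v 0 = ‖v‖ * cos β ∧ v 1 = ‖v‖ * sin β := by
  set z := Complex.orthonormalBasisOneI.repr.symm v
  have hz : ‖z‖ = ‖v‖ := LinearIsometryEquiv.norm_map _ v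
  refine ⟨Complex.arg z, ?_, ?_⟩
  · rw [← hz, Complex.norm_mul_cos_arg]; simp [z]
  · rw [← hz, Complex.norm_mul_sin_arg]; simp [z]

lemma proj_segment (α : ℝ) (x y : Plane) :
    proj α (segment ℝ x y)
      = segment ℝ (x 0 * cos α + x 1 * sin α) (y 0 * cos α + y 1 * sin α) := by
  let f : Plane →L[ℝ] ℝ := cos α • EuclideanSpace.proj 0 + sin α • EuclideanSpace.proj 1
  have h := image_segment ℝ f.toLinearMap.toAffineMap x y
  simpa [proj, f, mul_comm] using h

lemma exists_volume_proj_segment (x y : Plane) :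
    ∃ β, ∀ α,
      volume (proj α (segment ℝ x y)) = ENNReal.ofReal (dist x y * |cos (α - β)|) := by
  obtain ⟨β, h0, h1⟩ := exists_eq_norm_mul_cos_sin (x - y)
  refine ⟨β, fun α => ?_⟩
  have hlen : (x 0 * cos α + x 1 * sin α) - (y 0 * cos α + y 1 * sin α)
      = dist x y * cos (α - β) := by
    rw [dist_eq_norm, cos_sub]
    simp only [PiLp.sub_apply] at h0 h1
    linear_combination cos α * h0 + sin α * h1
  rw [proj_segment, segment_eq_uIcc, Real.volume_interval, abs_sub_comm, hlen, abs_mul,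
    abs_of_nonneg dist_nonneg]

lemma integral_max_cos_sub_cos {a : ℝ} (ha₀ : 0 ≤ a) (ha : a ≤ π / 2) :
    ∫ t in -(π / 2)..π / 2, max (cos t - cos a) 0 = 2 * sin a - 2 * a * cos a := by
  have hcont : Continuous fun t => max (cos t - cos a) 0 := by fun_prop
  have hinner :
      EqOn (fun t => max (cos t - cos a) 0) (fun t => cos t - cos a) (uIcc (-a) a) := by
    intro t ht
    rw [uIcc_of_le (by linarith), mem_Icc, ← abs_le] at ht
    have : cos a ≤ cos t :=
      cos_abs t ▸ cos_le_cos_of_nonneg_of_le_pi (abs_nonneg t) (by linarith) ht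
    exact max_eq_left (sub_nonneg.2 this)
  have houter : ∀ t, a ≤ |t| → |t| ≤ π / 2 → max (cos t - cos a) 0 = 0 := by
    intro t h₁ h₂
    have : cos t ≤ cos a := cos_abs t ▸ cos_le_cos_of_nonneg_of_le_pi ha₀ (by linarith) h₁
    exact max_eq_right (sub_nonpos.2 this)
  have hleft : ∫ t in -(π / 2)..-a, max (cos t - cos a) 0 = 0 := by
    rw [integral_congr (g := fun _ => 0), intervalIntegral.integral_zero]
    intro t ht
    rw [uIcc_of_le (by linarith), mem_Icc] at ht
    exact houter t (by rw [abs_of_nonpos (by linarith)]; linarith)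
      (by rw [abs_of_nonpos (by linarith)]; linarith)
  have hright : ∫ t in a..π / 2, max (cos t - cos a) 0 = 0 := by
    rw [integral_congr (g := fun _ => 0), intervalIntegral.integral_zero]
    intro t ht
    rw [uIcc_of_le ha, mem_Icc] at ht
    exact houter t (by rw [abs_of_nonneg (by linarith)]; linarith)
      (by rw [abs_of_nonneg (by linarith)]; linarith)
  rw [← integral_add_adjacent_intervals (a := -(π / 2)) (b := -a) (c := π / 2)
      (hcont.intervalIntegrable _ _) (hcont.intervalIntegrable _ _),
    ← integral_add_adjacent_intervals (a := -a) (b := a) (c := π / 2)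
      (hcont.intervalIntegrable _ _) (hcont.intervalIntegrable _ _),
    hleft, hright, integral_congr hinner,
    intervalIntegral.integral_sub intervalIntegrable_cos intervalIntegrable_const, integral_cos,
    intervalIntegral.integral_const, sin_neg, smul_eq_mul]
  ring

lemma integral_max_abs_cos_sub_sin (β : ℝ) {ε : ℝ} (hε : ε ∈ Icc 0 (π / 2)) :
    ∫ t in 0..2 * π, max (|cos (t - β)| - sin ε) 0
      = 4 * cos ε - (2 * π - 4 * ε) * sin ε := by
  set f : ℝ → ℝ := fun t => max (|cos t| - sin ε) 0
  have hper : Function.Periodic f π := fun t => by simp [f, cos_add_pi]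
  have hint : ∀ t₁ t₂, IntervalIntegrable f volume t₁ t₂ := fun _ _ =>
    Continuous.intervalIntegrable (by fun_prop) _ _
  have hhalf : ∫ t in -(π / 2)..π / 2, f t = 2 * cos ε - (π - 2 * ε) * sin ε := by
    have habs :
        EqOn f (fun t => max (cos t - cos (π / 2 - ε)) 0) (uIcc (-(π / 2)) (π / 2)) := by
      intro t ht
      rw [uIcc_of_le (by linarith [pi_pos])] at ht
      simp only [f, abs_of_nonneg (cos_nonneg_of_mem_Icc ht), cos_pi_div_two_sub]
    rw [integral_congr habs, integral_max_cos_sub_cos (by linarith [hε.2]) (by linarith [hε.1]),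
      sin_pi_div_two_sub, cos_pi_div_two_sub]
    ring
  calc ∫ t in 0..2 * π, f (t - β)
      = ∫ t in -β..-β + (2 : ℤ) • π, f t := by
        rw [integral_comp_sub_right]; congr 1 <;> simp; ring
    _ = 2 * ∫ t in -(π / 2)..-(π / 2) + π, f t := by
        rw [hper.intervalIntegral_add_zsmul_eq 2 _ hint,
          hper.intervalIntegral_add_eq (-β) (-(π / 2))]
        simp
    _ = 4 * cos ε - (2 * π - 4 * ε) * sin ε := by
        rw [show -(π / 2) + π = π / 2 by ring, hhalf]; ring

lemma lintegral_le_mul_measure_add_lintegral_max_sub {X : Type*} [MeasurableSpace X]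
    (μ : Measure X) {F : X → ℝ≥0∞} {g : X → ℝ} (hg : Measurable g) {A : Set X}
    (hF : ∀ a, F a ≤ A.indicator (fun a => ENNReal.ofReal (g a)) a) (c : ℝ) :
    ∫⁻ a, F a ∂μ
      ≤ ENNReal.ofReal c * μ A + ∫⁻ a, ENNReal.ofReal (max (g a - c) 0) ∂μ := by
  have hsplit : ∀ a, F a ≤ A.indicator (fun _ => ENNReal.ofReal c) a
      + ENNReal.ofReal (max (g a - c) 0) := by
    intro a
    refine (hF a).trans ?_
    by_cases ha : a ∈ A
    · rw [indicator_of_mem ha, indicator_of_mem ha]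
      exact (ENNReal.ofReal_le_ofReal (by linarith [le_max_left (g a - c) 0])).trans
        ENNReal.ofReal_add_le
    · simp [indicator_of_notMem ha]
  calc ∫⁻ a, F a ∂μ
      ≤ ∫⁻ a, (A.indicator (fun _ => ENNReal.ofReal c) a
          + ENNReal.ofReal (max (g a - c) 0)) ∂μ :=
        lintegral_mono hsplit
    _ = ∫⁻ a, A.indicator (fun _ => ENNReal.ofReal c) a ∂μ
          + ∫⁻ a, ENNReal.ofReal (max (g a - c) 0) ∂μ :=
        lintegral_add_right _ (by fun_prop)
    _ ≤ ENNReal.ofReal c * μ A + ∫⁻ a, ENNReal.ofReal (max (g a - c) 0) ∂μ := by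
        gcongr; exact lintegral_indicator_const_le A _

lemma lintegral_Ico_ofReal_eq_intervalIntegral {f : ℝ → ℝ} (hf : Continuous f)
    (hf₀ : ∀ t, 0 ≤ f t) {a b : ℝ} (hab : a ≤ b) :
    ∫⁻ t in Ico a b, ENNReal.ofReal (f t) = ENNReal.ofReal (∫ t in a..b, f t) := by
  rw [integral_of_le hab, ofReal_integral_eq_lintegral_ofReal
    (hf.integrableOn_Icc.mono_set Ioc_subset_Icc_self) (ae_of_all _ hf₀)]
  exact setLIntegral_congr Ico_ae_eq_Ioc

lemma four_mul_cos_sub_mul_sin_nonneg {ε : ℝ} (hε : ε ∈ Icc 0 (π / 2)) :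
    0 ≤ 4 * cos ε - (2 * π - 4 * ε) * sin ε := by
  rw [← integral_max_abs_cos_sub_sin 0 hε]
  exact integral_nonneg (by positivity) fun _ _ => le_max_right _ _

lemma lintegral_Ico_max_mul_abs_cos_sub_mul_sin {r : ℝ} (hr : 0 ≤ r) (β : ℝ) {ε : ℝ}
    (hε : ε ∈ Icc 0 (π / 2)) :
    ∫⁻ α in Ico 0 (2 * π), ENNReal.ofReal (max (r * |cos (α - β)| - r * sin ε) 0)
      = ENNReal.ofReal (r * (4 * cos ε - (2 * π - 4 * ε) * sin ε)) := by
  have hfactor : ∀ α,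
      max (r * |cos (α - β)| - r * sin ε) 0 = r * max (|cos (α - β)| - sin ε) 0 :=
    fun α => by rw [← mul_sub, mul_max_of_nonneg _ _ hr, mul_zero]
  simp_rw [hfactor, ENNReal.ofReal_mul hr]
  rw [lintegral_const_mul _ (by fun_prop), lintegral_Ico_ofReal_eq_intervalIntegral (by fun_prop)
    (fun _ => le_max_right _ _) (by positivity), integral_max_abs_cos_sub_sin β hε]

theorem far_outside_waste_general
    (U : Set Plane)
    (x y : Plane) (b : Set Plane) (hb : b = segment ℝ x y)
    (ε : ℝ) (hε : ε ∈ Icc 0 (Real.pi / 2))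
    (hA : volume {α ∈ Ico 0 (2 * Real.pi) | (proj α U ∩ proj α b).Nonempty}
        ≤ ENNReal.ofReal (2 * Real.pi - 4 * ε)) :
    (∫⁻ α in Ico 0 (2 * Real.pi), volume (proj α b ∩ proj α U))
      ≤ ENNReal.ofReal (4 * dist x y * Real.cos ε) := by
  obtain ⟨β, hβ⟩ := exists_volume_proj_segment x y
  set r := dist x y
  have hr : 0 ≤ r := dist_nonneg
  have hsinε : 0 ≤ sin ε := sin_nonneg_of_nonneg_of_le_pi hε.1 (by linarith [hε.2, pi_pos])
  set A := {α | (proj α U ∩ proj α b).Nonempty}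
  have hF : ∀ α, volume (proj α b ∩ proj α U)
      ≤ A.indicator (fun α => ENNReal.ofReal (r * |cos (α - β)|)) α := by
    intro α
    by_cases hα : α ∈ A
    · rw [indicator_of_mem hα, ← hβ, hb]
      exact measure_mono inter_subset_left
    · rw [indicator_of_notMem hα, inter_comm, not_nonempty_iff_eq_empty.1 hα, measure_empty]
  have hAμ : volume.restrict (Ico 0 (2 * π)) A ≤ ENNReal.ofReal (2 * π - 4 * ε) := by
    rwa [Measure.restrict_apply' measurableSet_Ico, inter_comm]
  calc (∫⁻ α in Ico 0 (2 * π), volume (proj α b ∩ proj α U))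
      ≤ ENNReal.ofReal (r * sin ε) * volume.restrict (Ico 0 (2 * π)) A
          + ∫⁻ α in Ico 0 (2 * π),
              ENNReal.ofReal (max (r * |cos (α - β)| - r * sin ε) 0) :=
        lintegral_le_mul_measure_add_lintegral_max_sub _ (by fun_prop) hF _
    _ ≤ ENNReal.ofReal (r * sin ε) * ENNReal.ofReal (2 * π - 4 * ε)
          + ENNReal.ofReal (r * (4 * cos ε - (2 * π - 4 * ε) * sin ε)) := by
        rw [lintegral_Ico_max_mul_abs_cos_sub_mul_sin hr β hε]; gcongr
    _ = ENNReal.ofReal (4 * r * cos ε) := by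
        rw [← ENNReal.ofReal_mul (mul_nonneg hr hsinε),
          ← ENNReal.ofReal_add (mul_nonneg (mul_nonneg hr hsinε) (by linarith [hε.2]))
            (mul_nonneg hr (four_mul_cos_sub_mul_sin_nonneg hε))]
        ring_nf

/-- Lemma 5 (far outside): if a segment `b` lies outside a compact convex set `U`
and the set of angles of lines through both `U` and `b` has measure at most
`2π − 4ε`, then `∫₀^{2π} λ(b(α) ∩ U(α)) dα ≤ 4·|b|·cos ε`. -/
theorem far_outside_waste
    (U : Set Plane) (hUcomp : IsCompact U) (hUconv : Convex ℝ U)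
    (x y : Plane) (b : Set Plane) (hb : b = segment ℝ x y)
    (hdisj : Disjoint b U)
    (ε : ℝ) (hε : ε ∈ Icc 0 (Real.pi / 2))
    (hA : volume {α ∈ Ico 0 (2 * Real.pi) | (proj α U ∩ proj α b).Nonempty}
        ≤ ENNReal.ofReal (2 * Real.pi - 4 * ε)) :
    (∫⁻ α in Ico 0 (2 * Real.pi), volume (proj α b ∩ proj α U))
      ≤ ENNReal.ofReal (4 * dist x y * Real.cos ε) :=
  far_outside_waste_general U x y b hb ε hε hA
end
end

section
/- Let s < t be reals, let D > 0 and w > 0, and let f̲, g̲ : [s, t] → ℝ be (D/2)-Lipschitz functions satisfying g̲(s) ≥ f̲(s) + w and f̲(t) ≥ g̲(t) + w. Define R_f := {(α, v) : α ∈ [s, t], f̲(α) ≤ v ≤ f̲(α) + w} and R_g := {(α, v) : α ∈ [s, t], g̲(α) ≤ v ≤ g̲(α) + w}. Then the two-dimensional Lebesgue measure of R_f ∩ R_g is at least w²/D. -/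
/-! The difference `g - f` is `D`-Lipschitz and drops by at least `2w` across `[s, t]`, so it
vanishes at some `α` with `[α - w/D, α + w/D] ⊆ [s, t]`. Over each `x` the two fibres overlap in
an interval of length `w - |f x - g x| ≥ w - D|x - α|`, and this tent has area `w²/D`. -/

open MeasureTheory Set

theorem continuousOn_of_abs_sub_le_mul {h : ℝ → ℝ} {S : Set ℝ} {L : ℝ}
    (hh : ∀ x ∈ S, ∀ y ∈ S, |h x - h y| ≤ L * |x - y|) : ContinuousOn h S := by
  refine (LipschitzOnWith.of_dist_le_mul (K := L.toNNReal) fun x hx y hy => ?_).continuousOn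
  rw [Real.dist_eq, Real.dist_eq, Real.coe_toNNReal']
  exact (hh x hx y hy).trans (mul_le_mul_of_nonneg_right (le_max_left _ _) (abs_nonneg _))

theorem abs_sub_sub_sub_le_add_mul {f g : ℝ → ℝ} {S : Set ℝ} {K L : ℝ}
    (hf : ∀ x ∈ S, ∀ y ∈ S, |f x - f y| ≤ K * |x - y|)
    (hg : ∀ x ∈ S, ∀ y ∈ S, |g x - g y| ≤ L * |x - y|) :
    ∀ x ∈ S, ∀ y ∈ S, |(g x - f x) - (g y - f y)| ≤ (K + L) * |x - y| := fun x hx y hy => by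
  rw [sub_sub_sub_comm]
  linarith [abs_sub (g x - g y) (f x - f y), hf x hx y hy, hg x hx y hy]

theorem exists_eq_zero_and_Icc_subset_of_abs_sub_le_mul {h : ℝ → ℝ} {s t L w : ℝ} (hst : s ≤ t)
    (hL : 0 < L) (hw : 0 ≤ w) (hh : ∀ x ∈ Icc s t, ∀ y ∈ Icc s t, |h x - h y| ≤ L * |x - y|)
    (hs : w ≤ h s) (ht : h t ≤ -w) :
    ∃ α, h α = 0 ∧ Icc (α - w / L) (α + w / L) ⊆ Icc s t := by
  obtain ⟨α, hα, hα0⟩ := intermediate_value_Icc' hst (continuousOn_of_abs_sub_le_mul hh)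
    (⟨by linarith, by linarith⟩ : (0 : ℝ) ∈ Icc (h t) (h s))
  have hsα := hh s (left_mem_Icc.2 hst) α hα
  have htα := hh t (right_mem_Icc.2 hst) α hα
  rw [hα0, sub_zero, abs_of_nonpos (sub_nonpos.2 hα.1)] at hsα
  rw [hα0, sub_zero, abs_of_nonneg (sub_nonneg.2 hα.2)] at htα
  refine ⟨α, hα0, Icc_subset_Icc ?_ ?_⟩
  · rw [le_sub_comm, div_le_iff₀' hL]
    linarith [le_abs_self (h s)]
  · rw [← le_sub_iff_add_le', div_le_iff₀' hL]
    linarith [neg_abs_le (h t)]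

theorem sub_mul_abs_sub_nonneg {α x w L : ℝ} (hL : 0 < L)
    (hx : x ∈ Icc (α - w / L) (α + w / L)) : 0 ≤ w - L * |x - α| := by
  have := mul_le_mul_of_nonneg_left (mem_Icc_iff_abs_le.2 hx) hL.le
  rwa [abs_sub_comm, mul_div_cancel₀ w hL.ne', ← sub_nonneg] at this

theorem integral_tent {r : ℝ} (hr : 0 ≤ r) (α w L : ℝ) :
    ∫ x in α - r..α + r, (w - L * |x - α|) = 2 * w * r - L * r ^ 2 := by
  have hcont : Continuous fun x : ℝ => w - L * |x| := by fun_prop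
  have right : ∫ x in (0 : ℝ)..r, (w - L * |x|) = w * r - L * r ^ 2 / 2 := by
    rw [intervalIntegral.integral_congr (g := fun x => w - L * x) fun x hx => by
      rw [uIcc_of_le hr] at hx; simp [abs_of_nonneg hx.1],
      intervalIntegral.integral_sub intervalIntegrable_const
        (intervalIntegral.intervalIntegrable_id.const_mul L), intervalIntegral.integral_const_mul]
    simp
    ring
  have left : ∫ x in -r..0, (w - L * |x|) = ∫ x in (0 : ℝ)..r, (w - L * |x|) := by
    simpa using (intervalIntegral.integral_comp_neg (fun x => w - L * |x|) (a := 0) (b := r)).symm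
  rw [intervalIntegral.integral_comp_sub_right (fun x => w - L * |x|)]
  simp only [sub_sub_cancel_left, add_sub_cancel_left]
  rw [← intervalIntegral.integral_add_adjacent_intervals (b := 0) (hcont.intervalIntegrable _ _)
    (hcont.intervalIntegrable _ _), left, right]
  ring

theorem ofReal_setIntegral_le_volume_regionBetween {α : Type*} [MeasurableSpace α] {μ : Measure α}
    [SFinite μ] {f g φ : α → ℝ} {s : Set α} (hs : MeasurableSet s)
    (hf : AEMeasurable f (μ.restrict s)) (hg : AEMeasurable g (μ.restrict s))
    (hφ : IntegrableOn φ s μ) (hφ₀ : ∀ x ∈ s, 0 ≤ φ x) (hφfg : ∀ x ∈ s, φ x ≤ g x - f x) :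
    ENNReal.ofReal (∫ x in s, φ x ∂μ) ≤ μ.prod volume (regionBetween f g s) := by
  rw [volume_regionBetween_eq_lintegral hf hg hs,
    ofReal_integral_eq_lintegral_ofReal hφ ((ae_restrict_iff' hs).2 (ae_of_all _ hφ₀))]
  exact setLIntegral_mono' hs fun x hx => ENNReal.ofReal_le_ofReal (hφfg x hx)

theorem regionBetween_max_min_add_subset {α : Type*} (f g : α → ℝ) (w : ℝ) {s S : Set α}
    (hs : s ⊆ S) :
    regionBetween (fun x => max (f x) (g x)) (fun x => min (f x) (g x) + w) s ⊆
      {q | q.1 ∈ S ∧ q.2 ∈ Icc (f q.1) (f q.1 + w)} ∩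
        {q | q.1 ∈ S ∧ q.2 ∈ Icc (g q.1) (g q.1 + w)} := by
  rintro ⟨x, v⟩ ⟨hx, hv⟩
  obtain ⟨⟨hfv, hgv⟩, hvw⟩ : (f x < v ∧ g x < v) ∧ v < min (f x) (g x) + w := by
    simpa only [mem_Ioo, max_lt_iff] using hv
  have := min_le_left (f x) (g x)
  have := min_le_right (f x) (g x)
  exact ⟨⟨hs hx, hfv.le, by linarith⟩, ⟨hs hx, hgv.le, by linarith⟩⟩

/-- Two bands of width `w` over `[s, t]` with `(D/2)`-Lipschitz lower endpoint
functions, one starting at least `w` above the other and ending at least `w`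
below it, overlap in a set of area at least `w²/D`. -/
theorem crossing_bands_overlap_ge
    (s t : ℝ) (hst : s < t) (D w : ℝ) (hD : 0 < D) (hw : 0 < w)
    (f g : ℝ → ℝ)
    (hf : ∀ x ∈ Icc s t, ∀ y ∈ Icc s t, |f x - f y| ≤ D / 2 * |x - y|)
    (hg : ∀ x ∈ Icc s t, ∀ y ∈ Icc s t, |g x - g y| ≤ D / 2 * |x - y|)
    (h₁ : f s + w ≤ g s) (h₂ : g t + w ≤ f t) :
    ENNReal.ofReal (w ^ 2 / D) ≤
      volume ({q : ℝ × ℝ | q.1 ∈ Icc s t ∧ q.2 ∈ Icc (f q.1) (f q.1 + w)} ∩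
              {q : ℝ × ℝ | q.1 ∈ Icc s t ∧ q.2 ∈ Icc (g q.1) (g q.1 + w)}) := by
  have hgf := abs_sub_sub_sub_le_add_mul hf hg
  rw [add_halves] at hgf
  obtain ⟨α, hα, hI⟩ :=
    exists_eq_zero_and_Icc_subset_of_abs_sub_le_mul hst.le hD hw.le hgf (by linarith) (by linarith)
  have hr : 0 < w / D := div_pos hw hD
  set I := Icc (α - w / D) (α + w / D)
  have tent_le : ∀ x ∈ I, w - D * |x - α| ≤ (min (f x) (g x) + w) - max (f x) (g x) :=
    fun x hx => by
      have := hgf x (hI hx) α (hI ⟨by linarith, by linarith⟩)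
      rw [hα, sub_zero] at this
      linarith [max_sub_min_eq_abs (f x) (g x)]
  have hfI := (continuousOn_of_abs_sub_le_mul hf).mono hI
  have hgI := (continuousOn_of_abs_sub_le_mul hg).mono hI
  calc ENNReal.ofReal (w ^ 2 / D) = ENNReal.ofReal (∫ x in I, (w - D * |x - α|)) := by
        rw [integral_Icc_eq_integral_Ioc, ← intervalIntegral.integral_of_le (by linarith),
          integral_tent hr.le]
        congr 1
        field_simp
        ring
    _ ≤ volume (regionBetween (fun x => max (f x) (g x)) (fun x => min (f x) (g x) + w) I) := by
        rw [Measure.volume_eq_prod]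
        exact ofReal_setIntegral_le_volume_regionBetween measurableSet_Icc
          ((hfI.sup hgI).aemeasurable measurableSet_Icc)
          (((hfI.inf hgI).add continuousOn_const).aemeasurable measurableSet_Icc)
          (by fun_prop : Continuous fun x => w - D * |x - α|).integrableOn_Icc
          (fun x hx => sub_mul_abs_sub_nonneg hD hx) tent_le
    _ ≤ _ := measure_mono (regionBetween_max_min_add_subset f g w hI)
end

section
/- Let U ⊆ ℝ² be a compact convex set with nonempty interior and perimeter p (the one-dimensional Hausdorff measure of its topological boundary). Then every rectifiable half-line barrier B for U satisfies |B| ≥ p, i.e., the one-dimensional Hausdorff measure of B is at least the full perimeter of U. -/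
open MeasureTheory Set
open scoped ENNReal NNReal

noncomputable section

/-- A half-line (ray) in ℝ²: the set {p + t·v : t ≥ 0} for some point p and
nonzero vector v. -/
def IsRay (L : Set Plane) : Prop :=
  ∃ p v : Plane, v ≠ 0 ∧ L = {x | ∃ t : ℝ, 0 ≤ t ∧ x = p + t • v}

/-- `B` is a half-line barrier for `U`: every ray meeting `U` meets `B`. -/
def IsRayBarrier (B U : Set Plane) : Prop :=
  ∀ L : Set Plane, IsRay L → (L ∩ U).Nonempty → (L ∩ B).Nonempty

/-!
The nearest-point projection `π` onto the closed convex set `U` is `1`-Lipschitz, so it does not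
increase `μH[1]`. A boundary point `x` of `U` has an outward normal `n`, and `π` maps the whole ray
`x + ℝ≥0 • n` to `x`; since `B` meets that ray, `x ∈ π '' B`. Hence `∂U ⊆ π '' B`, and
`μH[1] ∂U ≤ μH[1] (π '' B) ≤ μH[1] B`.
-/

open scoped RealInnerProductSpace

section InnerProductSpace

variable {E : Type*} [NormedAddCommGroup E] [InnerProductSpace ℝ E] {s : Set E}

theorem norm_sub_le_of_inner_sub_nonpos {a b pa pb : E} (hpa : pa ∈ s) (hpb : pb ∈ s)
    (ha : ∀ w ∈ s, ⟪a - pa, w - pa⟫ ≤ 0) (hb : ∀ w ∈ s, ⟪b - pb, w - pb⟫ ≤ 0) :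
    ‖pa - pb‖ ≤ ‖a - b‖ := by
  have hsum : ‖pa - pb‖ ^ 2 ≤ ⟪a - b, pa - pb⟫ := by
    have hab := add_nonpos (ha pb hpb) (hb pa hpa)
    have hexpand : ⟪a - pa, pb - pa⟫ + ⟪b - pb, pa - pb⟫
        = ‖pa - pb‖ ^ 2 - ⟪a - b, pa - pb⟫ := by
      rw [← real_inner_self_eq_norm_sq, ← neg_sub pa pb, inner_neg_right, inner_sub_left,
        inner_sub_left, inner_sub_left, inner_sub_left, inner_sub_right, inner_sub_right,
        inner_sub_right, inner_sub_right]
      ring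
    linarith
  have hcs : ⟪a - b, pa - pb⟫ ≤ ‖a - b‖ * ‖pa - pb‖ := real_inner_le_norm _ _
  nlinarith [norm_nonneg (pa - pb), norm_nonneg (a - b)]

/-- `π` is the nearest-point projection onto `s`. -/
theorem Convex.exists_lipschitzWith_one_proj (hs : Convex ℝ s) (hne : s.Nonempty)
    (hc : IsComplete s) :
    ∃ π : E → E, LipschitzWith 1 π ∧
      ∀ x ∈ s, ∀ u, (∀ w ∈ s, ⟪u - x, w - x⟫ ≤ 0) → π u = x := by
  have hproj (u : E) : ∃ v ∈ s, ∀ w ∈ s, ⟪u - v, w - v⟫ ≤ 0 := by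
    obtain ⟨v, hv, hmin⟩ := exists_norm_eq_iInf_of_complete_convex hne hc hs u
    exact ⟨v, hv, (norm_eq_iInf_iff_real_inner_le_zero hs hv).mp hmin⟩
  choose π hπs hπ using hproj
  refine ⟨π, LipschitzWith.of_dist_le_mul fun a b => ?_, fun x hx u hu => ?_⟩
  · simpa [dist_eq_norm] using norm_sub_le_of_inner_sub_nonpos (hπs a) (hπs b) (hπ a) (hπ b)
  · simpa [sub_eq_zero] using norm_sub_le_of_inner_sub_nonpos (hπs u) hx (hπ u) hu

theorem Convex.exists_ne_zero_inner_sub_nonpos [CompleteSpace E] (hs : Convex ℝ s)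
    (hint : (interior s).Nonempty) {x : E} (hx : x ∉ interior s) :
    ∃ n : E, n ≠ 0 ∧ ∀ w ∈ s, ⟪n, w - x⟫ ≤ 0 := by
  obtain ⟨f, hf0, hf⟩ := geometric_hahn_banach_of_nonempty_interior_point hs hx hint
  refine ⟨(InnerProductSpace.toDual ℝ E).symm f, by simpa using hf0, fun w hw => ?_⟩
  rw [InnerProductSpace.toDual_symm_apply, map_sub]
  linarith [hf w hw]

end InnerProductSpace

theorem IsRayBarrier.frontier_subset_image {B U : Set Plane} (hB : IsRayBarrier B U)
    (hUcl : IsClosed U) (hUconv : Convex ℝ U) (hUint : (interior U).Nonempty) {π : Plane → Plane}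
    (hπ : ∀ x ∈ U, ∀ u, (∀ w ∈ U, ⟪u - x, w - x⟫ ≤ 0) → π u = x) :
    frontier U ⊆ π '' B := by
  intro x hx
  have hxU : x ∈ U := hUcl.frontier_subset hx
  obtain ⟨n, hn0, hn⟩ := hUconv.exists_ne_zero_inner_sub_nonpos hUint hx.2
  obtain ⟨b, ⟨t, ht0, rfl⟩, hbB⟩ :=
    hB _ ⟨x, n, hn0, rfl⟩ ⟨x, ⟨0, le_rfl, by simp⟩, hxU⟩
  refine ⟨_, hbB, hπ x hxU _ fun w hw => ?_⟩
  rw [add_sub_cancel_left, real_inner_smul_left]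
  exact mul_nonpos_of_nonneg_of_nonpos ht0 (hn w hw)

theorem ray_barrier_length_ge_perimeter_general
    (U : Set Plane) (hUcomp : IsCompact U) (hUconv : Convex ℝ U)
    (hUint : (interior U).Nonempty) (p : ℝ≥0∞)
    (hp : μH[1] (frontier U) = p)
    (B : Set Plane) (hBbar : IsRayBarrier B U) :
    p ≤ μH[1] B := by
  obtain ⟨π, hlip, hπ⟩ := hUconv.exists_lipschitzWith_one_proj
    (hUint.mono interior_subset) hUcomp.isClosed.isComplete
  calc p = μH[1] (frontier U) := hp.symm
    _ ≤ μH[1] (π '' B) :=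
      measure_mono (hBbar.frontier_subset_image hUcomp.isClosed hUconv hUint hπ)
    _ ≤ μH[1] B := by simpa using hlip.hausdorffMeasure_image_le zero_le_one B

/-- Any rectifiable half-line barrier of a compact convex set with nonempty
interior has length at least the full perimeter. -/
theorem ray_barrier_length_ge_perimeter
    (U : Set Plane) (hUcomp : IsCompact U) (hUconv : Convex ℝ U)
    (hUint : (interior U).Nonempty) (p : ℝ≥0∞)
    (hp : μH[1] (frontier U) = p)
    (B : Set Plane) (hBrect : IsRectifiableSet B) (hBbar : IsRayBarrier B U) :
    p ≤ μH[1] B :=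
  ray_barrier_length_ge_perimeter_general U hUcomp hUconv hUint p hp B hBbar
end
end

section
/- Let S = [−1/2, 1/2]² and let O be the octagon obtained by attaching to each edge of S an isosceles triangle of height 29/590 erected outward on that edge (so O is the convex hull of S together with the four points (0, 1/2 + 29/590), (0, −1/2 − 29/590), (1/2 + 29/590, 0), (−1/2 − 29/590, 0)). Then for every point p = (p₁, p₂) ∈ ℝ² with p ∉ O, the set {α ∈ [0, 2π) : p₁·cos α + p₂·sin α ∈ S(α)} has Lebesgue measure at most 2π − 2·arctan(29/295). -/
open MeasureTheory Set
open scoped ENNReal NNReal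

noncomputable section

/-!
Write `h = 29/590`. The projection of the square at angle `α` is the interval of radius
`(|cos α| + |sin α|) / 2`, and a point `p` outside the octagon satisfies
`|p₀| + 2h|p₁| > 1/2 + h` or `2h|p₀| + |p₁| > 1/2 + h`. Since `sin β ≤ 2h cos β` exactly for
`β ≤ arctan 2h`, in the first case the projection of `p` misses that of the square for every
`β ∈ (0, arctan 2h)` if `|p₁| ≤ 1/2`, and for every `β ∈ (π/2 - arctan 2h, π/2)` otherwise
(reflected according to the signs of `p₀, p₁`). This condition is invariant under `α ↦ α + π`,
so two disjoint arcs of length `arctan 2h = arctan (29/295)` are excluded.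
-/

open Real

def unitSquare : Set Plane :=
  {q : Plane | q 0 ∈ Icc (-(1:ℝ)/2) (1/2) ∧ q 1 ∈ Icc (-(1:ℝ)/2) (1/2)}

lemma abs_le_of_mem_proj_unitSquare {α v : ℝ} (hv : v ∈ proj α unitSquare) :
    |v| ≤ (|cos α| + |sin α|) / 2 := by
  obtain ⟨q, ⟨⟨hq0, hq0'⟩, hq1, hq1'⟩, rfl⟩ := hv
  have h0 : |q 0| ≤ 1 / 2 := abs_le.2 ⟨by linarith, hq0'⟩
  have h1 : |q 1| ≤ 1 / 2 := abs_le.2 ⟨by linarith, hq1'⟩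
  calc |q 0 * cos α + q 1 * sin α| ≤ |q 0| * |cos α| + |q 1| * |sin α| := by
        simpa only [abs_mul] using abs_add_le (q 0 * cos α) (q 1 * sin α)
    _ ≤ 1 / 2 * |cos α| + 1 / 2 * |sin α| := by gcongr
    _ = (|cos α| + |sin α|) / 2 := by ring

lemma mem_convexHull_of_mem_cap {E : Type*} [AddCommGroup E] [Module ℝ E] {T : Set E}
    {e f : E} {h X Y : ℝ} (hh : 0 < h) (hA : (1 / 2 + h) • e ∈ T)
    (hB : (1 / 2 : ℝ) • (e + f) ∈ T) (hC : (1 / 2 : ℝ) • (e - f) ∈ T)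
    (hX : 1 / 2 ≤ X) (hXY : X + 2 * h * |Y| ≤ 1 / 2 + h) :
    X • e + Y • f ∈ convexHull ℝ T := by
  set a := (X - 1 / 2) / h
  have ha : a * h = X - 1 / 2 := div_mul_cancel₀ _ hh.ne'
  have ha₀ : 0 ≤ a := div_nonneg (by linarith) hh.le
  have hY : |Y| ≤ (1 - a) / 2 := by nlinarith
  obtain ⟨hY₁, hY₂⟩ := abs_le.1 hY
  have hcombo : X • e + Y • f = a • ((1 / 2 + h) • e)
      + ((1 - a) / 2 + Y) • ((1 / 2 : ℝ) • (e + f))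
      + ((1 - a) / 2 - Y) • ((1 / 2 : ℝ) • (e - f)) := by
    linear_combination (norm := module) -(ha • e)
  rw [hcombo]
  have := (convex_convexHull ℝ T).sum_mem (t := Finset.univ)
    (w := ![a, (1 - a) / 2 + Y, (1 - a) / 2 - Y])
    (z := ![(1 / 2 + h) • e, (1 / 2 : ℝ) • (e + f), (1 / 2 : ℝ) • (e - f)])
    (fun i _ ↦ by fin_cases i <;> simp <;> linarith) (by simp [Fin.sum_univ_three]; ring)
    (fun i _ ↦ by fin_cases i <;> exact subset_convexHull ℝ T ‹_›)
  simpa [Fin.sum_univ_three] using this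

lemma mem_convexHull_octagon {h : ℝ} (hh : 0 < h) {p : Plane}
    (h₀ : |p 0| + 2 * h * |p 1| ≤ 1 / 2 + h) (h₁ : 2 * h * |p 0| + |p 1| ≤ 1 / 2 + h) :
    p ∈ convexHull ℝ (unitSquare ∪
      {!₂[0, 1/2 + h], !₂[0, -(1/2 + h)], !₂[1/2 + h, 0], !₂[-(1/2 + h), 0]}) := by
  by_cases hsq : |p 0| ≤ 1 / 2 ∧ |p 1| ≤ 1 / 2
  · obtain ⟨⟨h1, h2⟩, h3, h4⟩ := And.imp abs_le.1 abs_le.1 hsq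
    exact subset_convexHull ℝ _ (Or.inl ⟨⟨by linarith, h2⟩, ⟨by linarith, h4⟩⟩)
  obtain ⟨e, f, X, Y, hef, rfl, hX, hXY⟩ : ∃ (e f : Plane) (X Y : ℝ),
      (e, f) ∈ ({(!₂[1, 0], !₂[0, 1]), (!₂[-1, 0], !₂[0, 1]), (!₂[0, 1], !₂[1, 0]),
        (!₂[0, -1], !₂[1, 0])} : Set (Plane × Plane)) ∧
      p = X • e + Y • f ∧ 1 / 2 ≤ X ∧ X + 2 * h * |Y| ≤ 1 / 2 + h := by
    rcases not_and_or.1 hsq with hx | hy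
    · rcases abs_cases (p 0) with ⟨hx0, -⟩ | ⟨hx0, -⟩
      · refine ⟨!₂[1, 0], !₂[0, 1], |p 0|, p 1, by simp, ?_, by linarith, h₀⟩
        ext i; fin_cases i <;> simp [hx0]
      · refine ⟨!₂[-1, 0], !₂[0, 1], |p 0|, p 1, by simp, ?_, by linarith, h₀⟩
        ext i; fin_cases i <;> simp [hx0]
    · rcases abs_cases (p 1) with ⟨hy0, -⟩ | ⟨hy0, -⟩
      · refine ⟨!₂[0, 1], !₂[1, 0], |p 1|, p 0, by simp, ?_, by linarith, by linarith⟩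
        ext i; fin_cases i <;> simp [hy0]
      · refine ⟨!₂[0, -1], !₂[1, 0], |p 1|, p 0, by simp, ?_, by linarith, by linarith⟩
        ext i; fin_cases i <;> simp [hy0]
  simp only [mem_insert_iff, mem_singleton_iff, Prod.mk.injEq] at hef
  refine mem_convexHull_of_mem_cap hh ?_ ?_ ?_ hX hXY <;>
    rcases hef with ⟨rfl, rfl⟩ | ⟨rfl, rfl⟩ | ⟨rfl, rfl⟩ | ⟨rfl, rfl⟩ <;>
    norm_num [unitSquare, ← WithLp.toLp_smul, ← WithLp.toLp_add, ← WithLp.toLp_sub,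
      Matrix.smul_cons]

lemma sin_le_mul_cos_iff_le_arctan {β m : ℝ} (h₁ : -(π / 2) < β) (h₂ : β < π / 2) :
    sin β ≤ m * cos β ↔ β ≤ arctan m := by
  rw [← div_le_iff₀ (cos_pos_of_mem_Ioo ⟨h₁, h₂⟩), ← tan_eq_sin_div_cos,
    ← arctan_le_arctan_iff, arctan_tan h₁ h₂]

lemma exists_Ioo_half_cos_add_sin_lt_of_lt {h a b : ℝ} (hh : 2 * h ≤ 1)
    (hab : 1 / 2 + h < a + 2 * h * b) :
    ∃ s, 0 ≤ s ∧ s + arctan (2 * h) ≤ π / 2 ∧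
      ∀ β ∈ Ioo s (s + arctan (2 * h)), (cos β + sin β) / 2 < a * cos β + b * sin β := by
  have hθ : arctan (2 * h) ≤ π / 4 := arctan_one ▸ arctan_le_arctan_iff.2 hh
  have hθ' := arctan_lt_pi_div_two (2 * h)
  suffices ∃ s, 0 ≤ s ∧ s + arctan (2 * h) ≤ π / 2 ∧ ∀ β ∈ Ioo s (s + arctan (2 * h)),
      0 < cos β ∧ (b - 1 / 2) * (2 * h * cos β) ≤ (b - 1 / 2) * sin β by
    obtain ⟨s, hs, hsθ, hβ⟩ := this
    refine ⟨s, hs, hsθ, fun β hβs ↦ ?_⟩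
    obtain ⟨hcos, hsin⟩ := hβ β hβs
    -- `(a - 1/2) cos β + (b - 1/2) sin β ≥ (a + 2hb - 1/2 - h) cos β > 0`
    nlinarith [mul_pos (sub_pos.2 hab) hcos]
  rcases le_or_gt b (1 / 2) with hb | hb
  · refine ⟨0, le_rfl, by linarith, fun β ⟨h₁, h₂⟩ ↦ ?_⟩
    have h₁' : -(π / 2) < β := by linarith [pi_pos]
    have h₂' : β < π / 2 := by linarith
    refine ⟨cos_pos_of_mem_Ioo ⟨h₁', h₂'⟩, mul_le_mul_of_nonpos_left ?_ (by linarith)⟩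
    exact (sin_le_mul_cos_iff_le_arctan h₁' h₂').2 (by linarith)
  · refine ⟨π / 2 - arctan (2 * h), by linarith, by linarith, fun β ⟨h₁, h₂⟩ ↦ ?_⟩
    have h₁' : -(π / 2) < β := by linarith [pi_pos]
    have h₂' : β < π / 2 := by linarith
    refine ⟨cos_pos_of_mem_Ioo ⟨h₁', h₂'⟩, mul_le_mul_of_nonneg_left ?_ (by linarith)⟩
    exact le_of_not_ge fun h ↦ by linarith [(sin_le_mul_cos_iff_le_arctan h₁' h₂').1 h]

lemma exists_Ioo_half_cos_add_sin_lt {h a b : ℝ} (hh : 2 * h ≤ 1)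
    (hab : 1 / 2 + h < a + 2 * h * b ∨ 1 / 2 + h < 2 * h * a + b) :
    ∃ s, 0 ≤ s ∧ s + arctan (2 * h) ≤ π / 2 ∧
      ∀ β ∈ Ioo s (s + arctan (2 * h)), (cos β + sin β) / 2 < a * cos β + b * sin β := by
  rcases hab with hab | hab
  · exact exists_Ioo_half_cos_add_sin_lt_of_lt hh hab
  obtain ⟨s, hs, hsθ, hβ⟩ :=
    exists_Ioo_half_cos_add_sin_lt_of_lt hh (by linarith : 1 / 2 + h < b + 2 * h * a)
  refine ⟨π / 2 - s - arctan (2 * h), by linarith, by linarith, fun β ⟨h₁, h₂⟩ ↦ ?_⟩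
  have := hβ (π / 2 - β) ⟨by linarith, by linarith⟩
  rw [cos_pi_div_two_sub, sin_pi_div_two_sub] at this
  linarith

lemma abs_mul_add_mul_of_mul_nonneg {x y c s : ℝ} (hxy : 0 ≤ x * y) (hc : 0 ≤ c) (hs : 0 ≤ s) :
    |x * c + y * s| = |x| * c + |y| * s := by
  rcases mul_nonneg_iff.1 hxy with ⟨hx, hy⟩ | ⟨hx, hy⟩
  · rw [abs_of_nonneg hx, abs_of_nonneg hy, abs_of_nonneg (by positivity)]
  · rw [abs_of_nonpos hx, abs_of_nonpos hy, abs_of_nonpos (by nlinarith)]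
    ring

lemma exists_Ioo_half_abs_cos_add_abs_sin_lt {h x y : ℝ} (hh : 2 * h ≤ 1)
    (hxy : 1 / 2 + h < |x| + 2 * h * |y| ∨ 1 / 2 + h < 2 * h * |x| + |y|) :
    ∃ s, 0 ≤ s ∧ s + arctan (2 * h) ≤ π ∧ ∀ α ∈ Ioo s (s + arctan (2 * h)),
      (|cos α| + |sin α|) / 2 < |x * cos α + y * sin α| := by
  obtain ⟨s, hs, hsθ, hβ⟩ := exists_Ioo_half_cos_add_sin_lt hh hxy
  have key : ∀ β ∈ Ioo s (s + arctan (2 * h)), ∀ x' : ℝ, |x'| = |x| → 0 ≤ x' * y →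
      (|cos β| + |sin β|) / 2 < |x' * cos β + y * sin β| := by
    intro β ⟨h₁, h₂⟩ x' hx' hx'y
    have hc : 0 ≤ cos β := cos_nonneg_of_mem_Icc ⟨by linarith [pi_pos], by linarith⟩
    have hs : 0 ≤ sin β := sin_nonneg_of_nonneg_of_le_pi (by linarith) (by linarith)
    rw [abs_of_nonneg hc, abs_of_nonneg hs, abs_mul_add_mul_of_mul_nonneg hx'y hc hs, hx']
    exact hβ β ⟨h₁, h₂⟩
  rcases le_total 0 (x * y) with hxy | hxy
  · exact ⟨s, hs, by linarith [pi_pos], fun α hα ↦ key α hα x rfl hxy⟩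
  refine ⟨π - s - arctan (2 * h), by linarith [pi_pos], by linarith, fun α ⟨h₁, h₂⟩ ↦ ?_⟩
  have := key (π - α) ⟨by linarith, by linarith⟩ (-x) (abs_neg x) (by linarith)
  rwa [cos_pi_sub, sin_pi_sub, abs_neg, neg_mul_neg] at this

lemma volume_Ico_diff_Ioo_union_Ioo {a b c d ℓ : ℝ} (hac : a ≤ c) (hcd : c + ℓ ≤ d)
    (hdb : d + ℓ ≤ b) (hℓ : 0 ≤ ℓ) :
    volume (Ico a b \ (Ioo c (c + ℓ) ∪ Ioo d (d + ℓ))) = ENNReal.ofReal (b - a - 2 * ℓ) := by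
  have hsub : Ioo c (c + ℓ) ∪ Ioo d (d + ℓ) ⊆ Ico a b :=
    union_subset (Ioo_subset_Ico_self.trans (Ico_subset_Ico hac (by linarith)))
      (Ioo_subset_Ico_self.trans (Ico_subset_Ico (by linarith) hdb))
  have hdisj : Disjoint (Ioo c (c + ℓ)) (Ioo d (d + ℓ)) :=
    disjoint_left.2 fun _ h₁ h₂ ↦ by linarith [h₁.2, h₂.1]
  rw [measure_sdiff hsub (measurableSet_Ioo.union measurableSet_Ioo).nullMeasurableSet
      (measure_ne_top_of_subset hsub (by simp)),
    measure_union hdisj measurableSet_Ioo, Real.volume_Ico, Real.volume_Ioo, Real.volume_Ioo,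
    add_sub_cancel_left, add_sub_cancel_left, ← ENNReal.ofReal_add hℓ hℓ,
    ← ENNReal.ofReal_sub _ (by linarith)]
  ring_nf

/-- From any point `p` outside the octagon obtained by erecting isosceles
triangles of height `29/590` on the edges of the square `S = [−1/2, 1/2]²`, the
set of angles `α ∈ [0, 2π)` whose projected line through `p` hits `S` has measure
at most `2π − 2·arctan(29/295)`. -/
theorem outside_octagon_angle_measure_le
    (S O : Set Plane)
    (hS : S = {q : Plane | q 0 ∈ Icc (-(1:ℝ)/2) (1/2) ∧ q 1 ∈ Icc (-(1:ℝ)/2) (1/2)})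
    (hO : O = convexHull ℝ (S ∪
      {!₂[0, 1/2 + 29/590], !₂[0, -(1/2 + 29/590)],
       !₂[1/2 + 29/590, 0], !₂[-(1/2 + 29/590), 0]}))
    (p : Plane) (hp : p ∉ O) :
    volume {α ∈ Ico 0 (2 * Real.pi) |
        p 0 * Real.cos α + p 1 * Real.sin α ∈ proj α S}
      ≤ ENNReal.ofReal (2 * Real.pi - 2 * Real.arctan (29 / 295)) := by
  subst hS hO
  have hout : 1 / 2 + 29 / 590 < |p 0| + 2 * (29 / 590) * |p 1| ∨
      1 / 2 + 29 / 590 < 2 * (29 / 590) * |p 0| + |p 1| := by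
    by_contra! hin
    exact hp (mem_convexHull_octagon (by norm_num) hin.1 hin.2)
  obtain ⟨s, hs, hsθ, hsep⟩ := exists_Ioo_half_abs_cos_add_abs_sin_lt (by norm_num) hout
  rw [show (29 / 295 : ℝ) = 2 * (29 / 590) by norm_num]
  set θ := arctan (2 * (29 / 590))
  have hθ : 0 ≤ θ := arctan_nonneg.2 (by norm_num)
  calc volume _ ≤ volume (Ico 0 (2 * π) \ (Ioo s (s + θ) ∪ Ioo (s + π) (s + π + θ))) := by
        refine measure_mono fun α ⟨hα, hproj⟩ ↦ ⟨hα, ?_⟩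
        have hbound := abs_le_of_mem_proj_unitSquare hproj
        rintro (hαs | ⟨h₁, h₂⟩)
        · exact (hsep α hαs).not_ge hbound
        · have := hsep (α - π) ⟨by linarith, by linarith⟩
          rw [cos_sub_pi, sin_sub_pi, abs_neg, abs_neg, mul_neg, mul_neg, ← neg_add, abs_neg]
            at this
          exact this.not_ge hbound
    _ = ENNReal.ofReal (2 * π - 0 - 2 * θ) :=
        volume_Ico_diff_Ioo_union_Ioo hs (by linarith) (by linarith) hθ
    _ = ENNReal.ofReal (2 * π - 2 * θ) := by rw [sub_zero]
end
end
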